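/- Let K, n, j, h be integers with K ≥ 2, n ≥ 1, j ≥ 1 and 1 ≤ h ≤ K−1. Then there do not exist nonnegative integers α_0, α_1, …, α_n and β_1, …, β_h such that α_0 + α_1 + ⋯ + α_n + β_1 + ⋯ + β_h = jK + 1 and α_0 + (K+1)α_1 + (2K+1)α_2 + ⋯ + (nK+1)α_n + (nK+2)β_1 + (nK+3)β_2 + ⋯ + (nK+h+1)β_h = nK + h + 1. -/

import Mathlib

/-!
Subtracting the first equation from the second leaves
`K * (∑ i α_i + j) + ∑ (nK + i) β_i = nK + h`.
If every `β_i` vanishes, `K` divides `h`, impossible for `0 < h < K`;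
otherwise the `β`-sum alone is at least `nK + 1`, forcing `jK < h < K`.
-/

open Finset

lemma Finset.sum_add_one_mul {ι R : Type*} [NonAssocSemiring R] (s : Finset ι) (w x : ι → R) :
    ∑ i ∈ s, (w i + 1) * x i = ∑ i ∈ s, w i * x i + ∑ i ∈ s, x i := by
  simp only [add_mul, one_mul, sum_add_distrib]

lemma Finset.sum_add_mul_eq_zero_or_lt {s : Finset ℕ} (hs : 0 ∉ s) (c : ℕ) (x : ℕ → ℕ) :
    ∑ i ∈ s, (c + i) * x i = 0 ∨ c < ∑ i ∈ s, (c + i) * x i := by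
  refine or_iff_not_imp_left.2 fun hne => ?_
  obtain ⟨i, hi, hxi⟩ := exists_ne_zero_of_sum_ne_zero hne
  have hi0 : i ≠ 0 := ne_of_mem_of_not_mem hi hs
  calc c < c + i := by omega
    _ ≤ (c + i) * x i := Nat.le_mul_of_pos_right _ (Nat.pos_of_ne_zero (right_ne_zero_of_mul hxi))
    _ ≤ ∑ i ∈ s, (c + i) * x i :=
      single_le_sum (f := fun i => (c + i) * x i) (fun _ _ => Nat.zero_le _) hi

lemma not_mul_add_eq_mul_add {K m n h S : ℕ} (hm : 0 < m) (hh : 0 < h) (hhK : h < K)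
    (hS : S = 0 ∨ n * K < S) : K * m + S ≠ n * K + h := by
  intro heq
  rcases hS with rfl | hS
  · have : K ∣ h := (Nat.dvd_add_right (dvd_mul_left K n)).1 (heq ▸ dvd_mul_right K m)
    exact absurd (Nat.le_of_dvd hh this) (not_le.2 hhK)
  · have : K ≤ K * m := Nat.le_mul_of_pos_right K hm
    omega

theorem no_coefficient_contribution (K n j h : ℕ)
    (hj : 1 ≤ j) (hh1 : 1 ≤ h) (hh2 : h ≤ K - 1) :
    ¬ ∃ (α β : ℕ → ℕ),
      ((∑ i ∈ Finset.range (n + 1), α i) + ∑ i ∈ Finset.Icc 1 h, β i = j * K + 1) ∧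
      ((∑ i ∈ Finset.range (n + 1), (i * K + 1) * α i) +
        ∑ i ∈ Finset.Icc 1 h, (n * K + 1 + i) * β i = n * K + h + 1) := by
  rintro ⟨α, β, hcount, hweight⟩
  simp only [add_right_comm (n * K) 1, sum_add_one_mul] at hweight
  set S := ∑ i ∈ Icc 1 h, (n * K + i) * β i
  have hαK : ∑ i ∈ range (n + 1), i * K * α i = K * ∑ i ∈ range (n + 1), i * α i := by
    rw [mul_sum]; exact sum_congr rfl fun i _ => by ring
  have hexcess : K * (∑ i ∈ range (n + 1), i * α i + j) + S = n * K + h := by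
    rw [hαK] at hweight; linarith
  exact not_mul_add_eq_mul_add (by omega) hh1 (by omega)
    (sum_add_mul_eq_zero_or_lt (by simp) _ _) hexcess
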